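/- For Laufer's polynomial f = x² + y³ + wz² + w^(2n+1)y (n ≥ 1 an integer) in ℂ[w,x,y,z], the 4×4 matrices Ψ = [[x, y, z, wⁿ], [−y², x, −ywⁿ, z], [−wz, w^(n+1), x, −y], [−yw^(n+1), −wz, y², x]] and Φ = [[x, −y, −z, −wⁿ], [y², x, ywⁿ, −z], [wz, −w^(n+1), x, y], [yw^(n+1), wz, −y², x]] satisfy ΨΦ = ΦΨ = f·I₄. -/

import Mathlib

open MvPolynomial

noncomputable section

abbrev S5 : Type := MvPolynomial (Fin 4) ℂ

def w5 : S5 := X 0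
def x5 : S5 := X 1
def y5 : S5 := X 2
def z5 : S5 := X 3

def fL (n : ℕ) : S5 := x5^2 + y5^3 + w5*z5^2 + w5^(2*n+1)*y5

def PsiL (n : ℕ) : Matrix (Fin 4) (Fin 4) S5 :=
  !![x5, y5, z5, w5^n;
     -y5^2, x5, -y5*w5^n, z5;
     -w5*z5, w5^(n+1), x5, -y5;
     -y5*w5^(n+1), -w5*z5, y5^2, x5]

def PhiL (n : ℕ) : Matrix (Fin 4) (Fin 4) S5 :=
  !![x5, -y5, -z5, -w5^n;
     y5^2, x5, y5*w5^n, -z5;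
     w5*z5, -w5^(n+1), x5, y5;
     y5*w5^(n+1), w5*z5, -y5^2, x5]

/-!
Ψ and Φ are `x • 1 + N` and `x • 1 - N` for one matrix `N` not involving `x`, and
`N * N = -(f - x²) • 1`. Since `x • 1` commutes with `N`, both products equal
`x² • 1 - N * N = f • 1`, as for the difference of two squares.
-/

section

variable {R : Type*} [CommRing R]

theorem Matrix.smul_one_add_mul_smul_one_sub {ι : Type*} [Fintype ι] [DecidableEq ι]
    (x g : R) (N : Matrix ι ι R) (hN : N * N = -g • 1) :
    (x • 1 + N) * (x • 1 - N) = (x ^ 2 + g) • (1 : Matrix ι ι R) ∧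
    (x • 1 - N) * (x • 1 + N) = (x ^ 2 + g) • (1 : Matrix ι ι R) := by
  constructor <;>
  · simp only [add_mul, mul_sub, sub_mul, mul_add, smul_one_mul,
      mul_smul_one, hN]
    module

/-- The off-diagonal part of `PsiL n`, with `a` standing for `wⁿ`. -/
def lauferOffDiag (w y z a : R) : Matrix (Fin 4) (Fin 4) R :=
  !![0, y, z, a;
     -y^2, 0, -y*a, z;
     -w*z, w*a, 0, -y;
     -y*w*a, -w*z, y^2, 0]

theorem lauferOffDiag_mul_self (w y z a : R) :
    lauferOffDiag w y z a * lauferOffDiag w y z a = -(y^3 + w*z^2 + w*a^2*y) • 1 := by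
  ext i j
  fin_cases i <;> fin_cases j <;>
  · simp [lauferOffDiag, Matrix.mul_apply, Fin.sum_univ_four]
    ring

end

theorem PsiL_eq (n : ℕ) : PsiL n = x5 • 1 + lauferOffDiag w5 y5 z5 (w5^n) := by
  ext i j : 1
  fin_cases i <;> fin_cases j <;> simp [PsiL, lauferOffDiag, pow_succ', mul_assoc]

theorem PhiL_eq (n : ℕ) : PhiL n = x5 • 1 - lauferOffDiag w5 y5 z5 (w5^n) := by
  ext i j : 1
  fin_cases i <;> fin_cases j <;> simp [PhiL, lauferOffDiag, pow_succ', mul_assoc]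

theorem fL_eq (n : ℕ) : fL n = x5^2 + (y5^3 + w5*z5^2 + w5*(w5^n)^2*y5) := by
  rw [fL]
  ring

theorem laufer_matrix_factorization_general (n : ℕ) :
    PsiL n * PhiL n = fL n • (1 : Matrix (Fin 4) (Fin 4) S5) ∧
    PhiL n * PsiL n = fL n • (1 : Matrix (Fin 4) (Fin 4) S5) := by
  rw [PsiL_eq, PhiL_eq, fL_eq]
  exact Matrix.smul_one_add_mul_smul_one_sub _ _ _ (lauferOffDiag_mul_self _ _ _ _)

theorem laufer_matrix_factorization (n : ℕ) (hn : 1 ≤ n) :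
    PsiL n * PhiL n = fL n • (1 : Matrix (Fin 4) (Fin 4) S5) ∧
    PhiL n * PsiL n = fL n • (1 : Matrix (Fin 4) (Fin 4) S5) :=
  laufer_matrix_factorization_general n

end
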